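/- For a computably enumerable set A ⊆ ℕ, the number 2^{−A} is regainingly approximable if and only if there exists a computable enumeration f of A and a computable, nondecreasing, unbounded function r : ℕ → ℕ such that {0,…,n−1} ∩ A ⊆ Enum(f)[r(n)] for infinitely many n. -/

import Mathlib

open Filter

noncomputable section

/-- A real is *regainingly approximable* if some computable nondecreasing rational
sequence converging to it is within `2⁻ⁿ` of it for infinitely many `n`. -/
def RegainApprox (α : ℝ) : Prop :=
  ∃ a : ℕ → ℚ, Computable a ∧ Monotone a ∧
    Tendsto (fun n => (a n : ℝ)) atTop (nhds α) ∧
    ∃ᶠ n in atTop, α - (a n : ℝ) < (2 : ℝ)⁻¹ ^ n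

def LeftComputable (α : ℝ) : Prop :=
  ∃ a : ℕ → ℚ, Computable a ∧ Monotone a ∧
    Tendsto (fun n => (a n : ℝ)) atTop (nhds α)

def ComputableReal (α : ℝ) : Prop :=
  ∃ a : ℕ → ℚ, Computable a ∧ ∀ n, |α - (a n : ℝ)| < (2 : ℝ)⁻¹ ^ n

/-- The real number `2^{-A}`. -/
def realOfSet (A : Set ℕ) : ℝ := ∑' a : A, (2 : ℝ)⁻¹ ^ ((a : ℕ) + 1)

/-- A set is regainingly approximable if it is c.e. and `2^{-A}` is regainingly approximable. -/
def RegainApproxSet (A : Set ℕ) : Prop :=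
  REPred (· ∈ A) ∧ RegainApprox (realOfSet A)

/-- `f` is an enumeration of `A`: `f k = n+1` means `n` is enumerated at stage `k`. -/
def IsEnum (f : ℕ → ℕ) (A : Set ℕ) : Prop := ∀ n, n ∈ A ↔ ∃ k, f k = n + 1

/-- The elements enumerated by `f` before stage `t`. -/
def EnumBy (f : ℕ → ℕ) (t : ℕ) : Set ℕ := {n | ∃ k < t, f k = n + 1}

/-- An enumeration `f` of `A` is `r`-good if for infinitely many `n`, all elements of
`A` below `n` are enumerated before stage `r n`. -/
def RGood (r : ℕ → ℕ) (f : ℕ → ℕ) (A : Set ℕ) : Prop :=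
  ∃ᶠ n in Filter.atTop, ∀ m < n, m ∈ A → m ∈ EnumBy f (r n)

/-
Let `E_t` be the part of `A` enumerated before stage `t`. If `E_t` contains every element of `A`
below `M`, then `2^{-A} - 2^{-E_t} ≤ 2^{-M}`; if it misses some `m ∈ A` with `m < M`, then
`2^{-A} - 2^{-E_t} ≥ 2^{-(m+1)} ≥ 2^{-M}`. The stage sums `2^{-E_t}` are dyadic rationals computable
from `t` and increase to `2^{-A}`. So for an `r`-good enumeration, `a_n = 2^{-E_{r(n+1)}}` is
within `2^{-(n+1)} < 2^{-n}` of `2^{-A}` whenever `n + 1` is good. Conversely, given a regaining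
approximation `(a_n)`, let `s n` be the first stage with `a_n - 2^{-n} < 2^{-E_t}`; at a regaining
index `n = N + 1` we get `2^{-A} - 2^{-E_{s n}} < 2^{-N}`, so `r N = max (s (N + 1)) N` is good.
-/

open Encodable

namespace Computable

variable {α : Type*} [Primcodable α]

theorem nat_find {p : α → ℕ → Prop} [∀ a, DecidablePred (p a)]
    (hp : Computable₂ fun a n => decide (p a n)) (h : ∀ a, ∃ n, p a n) :
    Computable fun a => Nat.find (h a) := by
  refine (Partrec.rfind (hp.comp Computable.fst Computable.snd).partrec.to₂).of_eq_tot fun a => ?_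
  refine Nat.mem_rfind.2 ⟨by simpa using Nat.find_spec (h a), fun hm => ?_⟩
  simpa using Nat.find_min (h a) hm

theorem sum_range {n : α → ℕ} {g : α → ℕ → ℕ} (hn : Computable n) (hg : Computable₂ g) :
    Computable fun a => ∑ i ∈ Finset.range (n a), g a i := by
  refine (Computable.nat_rec (h := fun a p => p.2 + g a p.1) hn (Computable.const 0)
    (Primrec.nat_add.to_comp.comp (Computable.snd.comp Computable.snd)
      (hg.comp Computable.fst (Computable.fst.comp Computable.snd))).to₂).of_eq fun a => ?_
  induction n a with
  | zero => rfl
  | succ k ih => rw [Finset.sum_range_succ, ← ih]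

theorem decide_exists_lt {n : α → ℕ} {p : α → ℕ → Prop} [∀ a, DecidablePred (p a)]
    (hn : Computable n) (hp : Computable₂ fun a i => decide (p a i)) :
    Computable fun a => decide (∃ i < n a, p a i) := by
  refine (Computable.nat_rec (h := fun a q => q.2 || decide (p a q.1)) hn (Computable.const false)
    (Primrec.or.to_comp.comp (Computable.snd.comp Computable.snd)
      (hp.comp Computable.fst (Computable.fst.comp Computable.snd))).to₂).of_eq fun a => ?_
  induction n a with
  | zero => simp
  | succ k ih =>
    rw [Bool.eq_iff_iff]
    simp only [Bool.or_eq_true, ih, decide_eq_true_eq]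
    constructor
    · rintro (⟨i, hi, h⟩ | h)
      exacts [⟨i, by omega, h⟩, ⟨k, by omega, h⟩]
    · rintro ⟨i, hi, h⟩
      rcases Nat.lt_succ_iff_lt_or_eq.1 hi with hi | rfl
      exacts [Or.inl ⟨i, hi, h⟩, Or.inr h]

end Computable

namespace Primrec

theorem nat_pow : Primrec₂ ((· ^ ·) : ℕ → ℕ → ℕ) :=
  Primrec₂.unpaired'.1 Nat.Primrec.pow

theorem nat_dvd : PrimrecRel ((· ∣ ·) : ℕ → ℕ → Prop) :=
  (Primrec.eq.comp (Primrec.nat_mod.comp Primrec.snd Primrec.fst) (Primrec.const 0)).of_eq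
    fun _ => Nat.dvd_iff_mod_eq_zero.symm

theorem nat_gcd : Primrec₂ Nat.gcd := by
  refine (Primrec.nat_findGreatest (p := fun (x : ℕ × ℕ) d => d ∣ x.1 ∧ d ∣ x.2)
    (Primrec.nat_add.comp Primrec.fst Primrec.snd)
    ((nat_dvd.comp Primrec.snd (Primrec.fst.comp Primrec.fst)).and
      (nat_dvd.comp Primrec.snd (Primrec.snd.comp Primrec.fst)))).to₂.of_eq fun a b => ?_
  rw [Nat.findGreatest_eq_iff]
  refine ⟨?_, fun _ => ⟨Nat.gcd_dvd_left a b, Nat.gcd_dvd_right a b⟩, fun d hlt hle hd => ?_⟩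
  · rcases Nat.eq_zero_or_pos (a + b) with h | h
    · obtain ⟨rfl, rfl⟩ : a = 0 ∧ b = 0 := by omega
      simp
    · exact Nat.le_of_dvd h (Nat.dvd_add (Nat.gcd_dvd_left a b) (Nat.gcd_dvd_right a b))
  · have hg : Nat.gcd a b ≠ 0 := by
      rw [Ne, Nat.gcd_eq_zero_iff]; omega
    exact absurd (Nat.le_of_dvd (Nat.pos_of_ne_zero hg) (Nat.dvd_gcd hd.1 hd.2)) (by omega)

theorem nat_count {p : ℕ → Prop} [DecidablePred p] (hp : PrimrecPred p) :
    Primrec (Nat.count p) :=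
  (Primrec.list_length.comp ((Primrec.listFilter hp).comp Primrec.list_range)).of_eq fun n => by
    simp [Nat.count, List.countP_eq_length_filter]

end Primrec

theorem Computable.nat_nth {p : ℕ → Prop} [DecidablePred p] (hp : PrimrecPred p)
    (hinf : (Set.ofPred p).Infinite) : Computable (Nat.nth p) := by
  have hex : ∀ k, ∃ m, p m ∧ Nat.count p m = k := fun k =>
    ⟨Nat.nth p k, Nat.nth_mem_of_infinite hinf k, Nat.count_nth_of_infinite hinf k⟩
  refine (Computable.nat_find (p := fun k m => p m ∧ Nat.count p m = k)
    ((hp.comp Primrec.snd).and (Primrec.eq.comp ((Primrec.nat_count hp).comp Primrec.snd)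
      Primrec.fst)).decide.to_comp hex).of_eq fun k => ?_
  obtain ⟨hm, hc⟩ := Nat.find_spec (hex k)
  calc Nat.find (hex k) = Nat.nth p (Nat.count p (Nat.find (hex k))) := (Nat.nth_count hm).symm
    _ = Nat.nth p k := by rw [hc]

/-- The code of `q` under `Rat`'s own `Encodable` instance. The `Primcodable ℚ` instance is a
different one: it comes from `Denumerable ℚ` and numbers rationals by counting these codes
(`encode_rat_eq_count`), which is why computability over `ℚ` goes through `ratCode`. -/
def ratCode (q : ℚ) : ℕ := Nat.pair (Equiv.intEquivNat q.num) q.den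

def IsRatCode (c : ℕ) : Prop := c.unpair.2 ≠ 0 ∧ Nat.Coprime ((c.unpair.1 + 1) / 2) c.unpair.2

instance : DecidablePred IsRatCode := fun _ => inferInstanceAs (Decidable (_ ∧ _))

theorem natAbs_intEquivNat_symm (k : ℕ) : (Equiv.intEquivNat.symm k).natAbs = (k + 1) / 2 := by
  obtain ⟨z, rfl⟩ := Equiv.intEquivNat.surjective k
  rw [Equiv.symm_apply_apply]
  cases z with
  | ofNat n => show n = (2 * n + 1) / 2; omega
  | negSucc n => show n + 1 = (2 * n + 1 + 1) / 2; omega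

theorem isRatCode_iff_mem_range {c : ℕ} : IsRatCode c ↔ c ∈ Set.range ratCode := by
  constructor
  · rintro ⟨hd, hc⟩
    refine ⟨Rat.mk' (Equiv.intEquivNat.symm c.unpair.1) c.unpair.2 hd
      (by rwa [natAbs_intEquivNat_symm]), ?_⟩
    simp [ratCode]
  · rintro ⟨q, rfl⟩
    refine ⟨by simp [ratCode, q.den_nz], ?_⟩
    simpa [ratCode, ← natAbs_intEquivNat_symm] using q.reduced

theorem primrecPred_isRatCode : PrimrecPred IsRatCode := by
  have hnum : Primrec fun c : ℕ => (c.unpair.1 + 1) / 2 :=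
    Primrec.nat_div.comp (Primrec.succ.comp (Primrec.fst.comp Primrec.unpair)) (Primrec.const 2)
  have hden : Primrec fun c : ℕ => c.unpair.2 := Primrec.snd.comp Primrec.unpair
  exact ((Primrec.eq.comp hden (Primrec.const 0)).not.and
    (Primrec.eq.comp (Primrec.nat_gcd.comp hnum hden) (Primrec.const 1))).of_eq fun c => Iff.rfl

theorem encode_rat_eq_count (q : ℚ) :
    @encode ℚ Primcodable.toEncodable q = Nat.count IsRatCode (ratCode q) :=
  List.countP_congr fun c _ => by
    simp only [decide_eq_true_eq]
    exact isRatCode_iff_mem_range.symm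

theorem infinite_isRatCode : (Set.ofPred IsRatCode).Infinite := by
  have : Set.ofPred IsRatCode = Set.range ratCode := Set.ext fun _ => isRatCode_iff_mem_range
  rw [this]
  exact Set.infinite_range_of_injective (encode_injective (α := ℚ))

theorem computable_ratCode : Computable ratCode :=
  ((Computable.nat_nth primrecPred_isRatCode infinite_isRatCode).comp Computable.encode).of_eq
    fun q => by
      rw [encode_rat_eq_count, Nat.nth_count (isRatCode_iff_mem_range.2 ⟨q, rfl⟩)]

theorem Computable.of_ratCode {α : Type*} [Primcodable α] {f : α → ℚ}
    (h : Computable fun a => ratCode (f a)) : Computable f :=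
  Computable.encode_iff.1 <|
    ((Primrec.nat_count primrecPred_isRatCode).to_comp.comp h).of_eq fun a =>
      (encode_rat_eq_count (f a)).symm

theorem ratCode_natCast_div {N d : ℕ} (hd : d ≠ 0) :
    ratCode ((N : ℚ) / d) = Nat.pair (2 * (N / N.gcd d)) (d / N.gcd d) := by
  rw [← Int.cast_natCast N, ← Rat.mkRat_eq_div, ← Rat.normalize_eq_mkRat hd, Rat.normalize_eq hd,
    ratCode]
  simp only [Int.natAbs_natCast]
  rw [← Int.natCast_div]
  rfl

theorem computable_natCast_div_two_pow : Computable₂ fun N B : ℕ => (N : ℚ) / 2 ^ B := by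
  have hd : Computable₂ fun (_ B : ℕ) => 2 ^ B :=
    (Primrec.nat_pow.comp (Primrec.const 2) Primrec.snd).to_comp
  have hg : Computable₂ fun N B : ℕ => N.gcd (2 ^ B) :=
    Primrec.nat_gcd.to_comp.comp Computable.fst hd
  have hc : Computable fun x : ℕ × ℕ =>
      Nat.pair (2 * (x.1 / x.1.gcd (2 ^ x.2))) (2 ^ x.2 / x.1.gcd (2 ^ x.2)) :=
    Primrec₂.natPair.to_comp.comp
      (Primrec.nat_mul.to_comp.comp (Computable.const 2)
        (Primrec.nat_div.to_comp.comp Computable.fst hg))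
      (Primrec.nat_div.to_comp.comp hd hg)
  refine (Computable.of_ratCode (f := fun x : ℕ × ℕ => (x.1 : ℚ) / 2 ^ x.2)
    (hc.of_eq fun x => ?_)).to₂
  rw [← ratCode_natCast_div (by positivity)]
  push_cast
  rfl

/-- `Equiv.intEquivNat` codes `n ≥ 0` as `2 * n` and `-(n + 1)` as `2 * n + 1`. -/
theorem lt_natCast_div_iff (q : ℚ) {N d : ℕ} (hd : 0 < d) :
    q < N / d ↔
      (ratCode q).unpair.1 % 2 = 1 ∨ (ratCode q).unpair.1 / 2 * d < N * (ratCode q).unpair.2 := by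
  have hden : (0 : ℚ) < q.den := by exact_mod_cast q.den_pos
  have hcross : q < N / d ↔ q.num * d < (N * q.den : ℤ) := by
    rw [lt_div_iff₀ (by exact_mod_cast hd), ← Rat.num_div_den q, div_mul_eq_mul_div,
      div_lt_iff₀ hden, Rat.num_div_den]
    exact_mod_cast Iff.rfl
  rw [hcross, ratCode, Nat.unpair_pair]
  cases q.num with
  | ofNat k =>
    show _ ↔ 2 * k % 2 = 1 ∨ 2 * k / 2 * d < N * q.den
    rw [show 2 * k / 2 = k by omega, Int.ofNat_eq_natCast]
    norm_cast
    simp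
  | negSucc k =>
    refine iff_of_true ?_ (Or.inl (show (2 * k + 1) % 2 = 1 by omega))
    have := Int.negSucc_lt_zero k
    have : (0 : ℤ) ≤ N * q.den := by positivity
    nlinarith

theorem computable_decide_lt_natCast_div_two_pow :
    Computable₂ fun (q : ℚ) (x : ℕ × ℕ) => decide (q < x.1 / 2 ^ x.2) := by
  have hc : Computable fun p : ℚ × (ℕ × ℕ) => (ratCode p.1).unpair :=
    Primrec.unpair.to_comp.comp (computable_ratCode.comp Computable.fst)
  have hd : Computable fun p : ℚ × (ℕ × ℕ) => 2 ^ p.2.2 :=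
    Primrec.nat_pow.to_comp.comp (Computable.const 2) (Computable.snd.comp Computable.snd)
  have hneg : Computable fun p : ℚ × (ℕ × ℕ) => decide ((ratCode p.1).unpair.1 % 2 = 1) :=
    Primrec.eq.decide.to_comp.comp
      (Primrec.nat_mod.to_comp.comp (Computable.fst.comp hc) (Computable.const 2))
      (Computable.const 1)
  have hlt : Computable fun p : ℚ × (ℕ × ℕ) =>
      decide ((ratCode p.1).unpair.1 / 2 * 2 ^ p.2.2 < p.2.1 * (ratCode p.1).unpair.2) :=
    Primrec.nat_lt.decide.to_comp.comp
      (Primrec.nat_mul.to_comp.comp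
        (Primrec.nat_div.to_comp.comp (Computable.fst.comp hc) (Computable.const 2)) hd)
      (Primrec.nat_mul.to_comp.comp (Computable.fst.comp Computable.snd)
        (Computable.snd.comp hc))
  show Computable fun p : ℚ × (ℕ × ℕ) => decide (p.1 < p.2.1 / 2 ^ p.2.2)
  refine (Primrec.or.to_comp.comp hneg hlt).of_eq fun p => ?_
  have h := lt_natCast_div_iff p.1 (N := p.2.1) (d := 2 ^ p.2.2) (by positivity)
  push_cast at h
  simp [h]

theorem summable_two_inv_pow_succ : Summable fun m : ℕ => (2 : ℝ)⁻¹ ^ (m + 1) :=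
  (summable_geometric_of_lt_one (by norm_num) (by norm_num)).comp_injective (add_left_injective 1)

theorem realOfSet_eq_tsum_indicator (S : Set ℕ) :
    realOfSet S = ∑' m, S.indicator (fun m => (2 : ℝ)⁻¹ ^ (m + 1)) m :=
  tsum_subtype S fun m => (2 : ℝ)⁻¹ ^ (m + 1)

theorem summable_indicator_two_inv_pow_succ (S : Set ℕ) :
    Summable (S.indicator fun m => (2 : ℝ)⁻¹ ^ (m + 1)) :=
  summable_two_inv_pow_succ.indicator S

theorem realOfSet_mono {S T : Set ℕ} (h : S ⊆ T) : realOfSet S ≤ realOfSet T := by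
  rw [realOfSet_eq_tsum_indicator, realOfSet_eq_tsum_indicator]
  exact (summable_indicator_two_inv_pow_succ S).tsum_le_tsum
    (Set.indicator_le_indicator_of_subset h fun _ => by positivity)
    (summable_indicator_two_inv_pow_succ T)

theorem realOfSet_union {S T : Set ℕ} (h : Disjoint S T) :
    realOfSet (S ∪ T) = realOfSet S + realOfSet T := by
  rw [realOfSet_eq_tsum_indicator, realOfSet_eq_tsum_indicator, realOfSet_eq_tsum_indicator,
    Set.indicator_union_of_disjoint h]
  exact (summable_indicator_two_inv_pow_succ S).tsum_add (summable_indicator_two_inv_pow_succ T)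

theorem realOfSet_sub_of_subset {S T : Set ℕ} (h : T ⊆ S) :
    realOfSet S - realOfSet T = realOfSet (S \ T) := by
  rw [sub_eq_iff_eq_add', ← realOfSet_union Set.disjoint_sdiff_right, Set.union_sdiff_cancel h]

theorem two_inv_pow_succ_le_realOfSet {S : Set ℕ} {m : ℕ} (h : m ∈ S) :
    (2 : ℝ)⁻¹ ^ (m + 1) ≤ realOfSet S := by
  rw [realOfSet_eq_tsum_indicator, ← Set.indicator_of_mem h (fun m => (2 : ℝ)⁻¹ ^ (m + 1))]
  exact (summable_indicator_two_inv_pow_succ S).le_tsum m fun _ _ =>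
    Set.indicator_nonneg (fun _ _ => by positivity) _

theorem realOfSet_Ici (n : ℕ) : realOfSet (Set.Ici n) = (2 : ℝ)⁻¹ ^ n := by
  calc realOfSet (Set.Ici n) = ∑' m, 2⁻¹ * if n ≤ m then (2 : ℝ)⁻¹ ^ m else 0 := by
        rw [realOfSet_eq_tsum_indicator]
        refine tsum_congr fun m => ?_
        by_cases hm : n ≤ m <;> simp [hm, pow_succ, mul_comm]
    _ = (2 : ℝ)⁻¹ ^ n := by
        rw [tsum_mul_left, tsum_geometric_inv_two_ge]
        ring

theorem realOfSet_le_of_subset_Ici {S : Set ℕ} {n : ℕ} (h : S ⊆ Set.Ici n) :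
    realOfSet S ≤ (2 : ℝ)⁻¹ ^ n :=
  realOfSet_Ici n ▸ realOfSet_mono h

theorem realOfSet_eq_sum_range {S : Set ℕ} [DecidablePred (· ∈ S)] {B : ℕ}
    (h : S ⊆ Set.Iio B) :
    realOfSet S = ∑ m ∈ Finset.range B, if m ∈ S then (2 : ℝ)⁻¹ ^ (m + 1) else 0 := by
  rw [realOfSet_eq_tsum_indicator, tsum_eq_sum (s := Finset.range B)]
  · simp only [Set.indicator_apply]
  · intro m hm
    exact Set.indicator_of_notMem (fun hmS => hm (Finset.mem_range.2 (h hmS))) _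

section Enumeration

variable {f : ℕ → ℕ} {A : Set ℕ}

theorem enumBy_mono (f : ℕ → ℕ) : Monotone (EnumBy f) :=
  fun _ _ hst _ ⟨k, hk, hfk⟩ => ⟨k, hk.trans_le hst, hfk⟩

theorem IsEnum.enumBy_subset (hf : IsEnum f A) (t : ℕ) : EnumBy f t ⊆ A :=
  fun m ⟨k, _, hk⟩ => (hf m).2 ⟨k, hk⟩

theorem IsEnum.eventually_forall_lt_mem_enumBy (hf : IsEnum f A) (M : ℕ) :
    ∀ᶠ t in atTop, ∀ m < M, m ∈ A → m ∈ EnumBy f t := by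
  refine (eventually_all_finite (Set.finite_Iio M)).2 fun m _ => ?_
  by_cases hm : m ∈ A
  · obtain ⟨k, hk⟩ := (hf m).1 hm
    exact (eventually_gt_atTop k).mono fun t hkt _ => ⟨k, hkt, hk⟩
  · exact Eventually.of_forall fun _ hmA => absurd hmA hm

theorem IsEnum.realOfSet_enumBy_le (hf : IsEnum f A) (t : ℕ) :
    realOfSet (EnumBy f t) ≤ realOfSet A :=
  realOfSet_mono (hf.enumBy_subset t)

theorem IsEnum.realOfSet_sub_enumBy_le (hf : IsEnum f A) {t M : ℕ}
    (h : ∀ m < M, m ∈ A → m ∈ EnumBy f t) :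
    realOfSet A - realOfSet (EnumBy f t) ≤ (2 : ℝ)⁻¹ ^ M := by
  rw [realOfSet_sub_of_subset (hf.enumBy_subset t)]
  refine realOfSet_le_of_subset_Ici fun m ⟨hmA, hmt⟩ => ?_
  by_contra hlt
  exact hmt (h m (not_le.1 hlt) hmA)

theorem IsEnum.mem_enumBy_of_realOfSet_sub_lt (hf : IsEnum f A) {t M : ℕ}
    (h : realOfSet A - realOfSet (EnumBy f t) < (2 : ℝ)⁻¹ ^ M) :
    ∀ m < M, m ∈ A → m ∈ EnumBy f t := by
  intro m hm hmA
  by_contra hmt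
  have hle := two_inv_pow_succ_le_realOfSet (show m ∈ A \ EnumBy f t from ⟨hmA, hmt⟩)
  rw [← realOfSet_sub_of_subset (hf.enumBy_subset t)] at hle
  have := pow_le_pow_of_le_one (by norm_num) (by norm_num) (show m + 1 ≤ M from hm)
    (a := (2 : ℝ)⁻¹)
  linarith

theorem IsEnum.tendsto_realOfSet_enumBy (hf : IsEnum f A) :
    Tendsto (fun t => realOfSet (EnumBy f t)) atTop (nhds (realOfSet A)) := by
  refine tendsto_order.2 ⟨fun x hx => ?_, fun x hx =>
    Eventually.of_forall fun t => (hf.realOfSet_enumBy_le t).trans_lt hx⟩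
  obtain ⟨M, hM⟩ := exists_pow_lt_of_lt_one (sub_pos.2 hx) (by norm_num : (2 : ℝ)⁻¹ < 1)
  filter_upwards [hf.eventually_forall_lt_mem_enumBy M] with t ht
  linarith [hf.realOfSet_sub_enumBy_le ht]

end Enumeration

instance (f : ℕ → ℕ) (t : ℕ) : DecidablePred (· ∈ EnumBy f t) :=
  fun m => inferInstanceAs (Decidable (∃ k < t, f k = m + 1))

def stageBound (f : ℕ → ℕ) (t : ℕ) : ℕ := ∑ k ∈ Finset.range t, f k

theorem lt_stageBound_of_mem_enumBy {f : ℕ → ℕ} {t m : ℕ} (h : m ∈ EnumBy f t) :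
    m < stageBound f t := by
  obtain ⟨k, hk, hfk⟩ := h
  have := Finset.single_le_sum (fun i _ => Nat.zero_le (f i)) (Finset.mem_range.2 hk)
  rw [← stageBound, hfk] at this
  omega

def stageNum (f : ℕ → ℕ) (t : ℕ) : ℕ :=
  ∑ m ∈ Finset.range (stageBound f t), if m ∈ EnumBy f t then 2 ^ (stageBound f t - (m + 1)) else 0

def stageSum (f : ℕ → ℕ) (t : ℕ) : ℚ := (stageNum f t : ℚ) / 2 ^ stageBound f t

theorem cast_stageSum (f : ℕ → ℕ) (t : ℕ) : (stageSum f t : ℝ) = realOfSet (EnumBy f t) := by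
  rw [realOfSet_eq_sum_range fun _ => lt_stageBound_of_mem_enumBy, stageSum, stageNum]
  push_cast
  rw [Finset.sum_div]
  refine Finset.sum_congr rfl fun m hm => ?_
  split_ifs
  · obtain ⟨k, hk⟩ : ∃ k, stageBound f t = k + (m + 1) :=
      ⟨stageBound f t - (m + 1), by have := Finset.mem_range.1 hm; omega⟩
    push_cast
    rw [hk, Nat.add_sub_cancel, pow_add, inv_pow]
    field_simp
  · simp

theorem computable_stageBound {f : ℕ → ℕ} (hf : Computable f) : Computable (stageBound f) :=
  Computable.sum_range Computable.id (hf.comp Computable.snd)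

theorem computable_decide_mem_enumBy {f : ℕ → ℕ} (hf : Computable f) :
    Computable₂ fun t m => decide (m ∈ EnumBy f t) :=
  Computable.decide_exists_lt (p := fun (x : ℕ × ℕ) k => f k = x.2 + 1) Computable.fst
    (Primrec.eq.decide.to_comp.comp (hf.comp Computable.snd)
      (Computable.succ.comp (Computable.snd.comp Computable.fst)))

theorem computable_stageNum {f : ℕ → ℕ} (hf : Computable f) : Computable (stageNum f) := by
  have hterm : Computable fun x : ℕ × ℕ =>
      bif decide (x.2 ∈ EnumBy f x.1) then 2 ^ (stageBound f x.1 - (x.2 + 1)) else 0 :=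
    Computable.cond (computable_decide_mem_enumBy hf) (Primrec.nat_pow.to_comp.comp
      (Computable.const 2) (Primrec.nat_sub.to_comp.comp
        ((computable_stageBound hf).comp Computable.fst) (Computable.succ.comp Computable.snd)))
      (Computable.const 0)
  exact (Computable.sum_range (computable_stageBound hf) hterm.to₂).of_eq fun t => by
    simp only [stageNum, Bool.cond_decide]

theorem computable_stageSum {f : ℕ → ℕ} (hf : Computable f) : Computable (stageSum f) :=
  computable_natCast_div_two_pow.comp (computable_stageNum hf) (computable_stageBound hf)

open Nat.Partrec in
theorem REPred.exists_computable_isEnum {A : Set ℕ} (hA : REPred (· ∈ A)) :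
    ∃ f : ℕ → ℕ, Computable f ∧ IsEnum f A := by
  obtain ⟨c, hc⟩ := Code.exists_code.1 (Partrec.nat_iff.1 (hA.map (g := fun _ _ => 0)
    (Computable.const 0).to₂))
  have hdom : ∀ n, (c.eval n).Dom ↔ n ∈ A := fun n => by
    rw [hc]
    exact ⟨fun ⟨h, _⟩ => h, fun h => ⟨h, trivial⟩⟩
  refine ⟨fun k => bif (c.evaln k.unpair.1 k.unpair.2).isSome then k.unpair.2 + 1 else 0,
    ?_, fun n => ⟨fun hn => ?_, fun ⟨k, hk⟩ => ?_⟩⟩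
  · exact (Primrec.cond (Primrec.option_isSome.comp (Code.primrec_evaln.comp
      (((Primrec.fst.comp Primrec.unpair).pair (Primrec.const c)).pair
        (Primrec.snd.comp Primrec.unpair))))
      (Primrec.succ.comp (Primrec.snd.comp Primrec.unpair)) (Primrec.const 0)).to_comp
  · obtain ⟨s, hs⟩ := Code.evaln_complete.1 (Part.get_mem ((hdom n).2 hn))
    exact ⟨Nat.pair s n, by simp [Option.isSome_iff_exists.2 ⟨_, hs⟩]⟩
  · cases hs : (c.evaln k.unpair.1 k.unpair.2).isSome
    · simp [hs] at hk
    · obtain ⟨v, hv⟩ := Option.isSome_iff_exists.1 hs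
      simp only [hs, cond_true, Nat.succ_inj] at hk
      exact (hdom n).1 (Part.dom_iff_mem.2 ⟨v, hk ▸ Code.evaln_sound hv⟩)

theorem natCast_div_two_pow_add_two_inv_pow (N B n : ℕ) :
    (N : ℚ) / 2 ^ B + 2⁻¹ ^ n = ((N * 2 ^ n + 2 ^ B : ℕ) : ℚ) / 2 ^ (B + n) := by
  push_cast
  rw [pow_add, inv_pow]
  field_simp

theorem computable_decide_sub_lt_realOfSet_enumBy {a : ℕ → ℚ} {f : ℕ → ℕ} (ha : Computable a)
    (hf : Computable f) :
    Computable₂ fun n t => decide ((a n : ℝ) - 2⁻¹ ^ n < realOfSet (EnumBy f t)) := by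
  have hiff (n t : ℕ) : (a n : ℝ) - 2⁻¹ ^ n < realOfSet (EnumBy f t) ↔
      a n < ((stageNum f t * 2 ^ n + 2 ^ stageBound f t : ℕ) : ℚ) / 2 ^ (stageBound f t + n) := by
    have hcast : ((stageSum f t + 2⁻¹ ^ n : ℚ) : ℝ) = realOfSet (EnumBy f t) + 2⁻¹ ^ n := by
      push_cast [cast_stageSum]
      rfl
    rw [sub_lt_iff_lt_add, ← hcast, Rat.cast_lt, stageSum, natCast_div_two_pow_add_two_inv_pow]
  have hB := computable_stageBound hf
  have hx : Computable fun p : ℕ × ℕ =>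
      (stageNum f p.2 * 2 ^ p.1 + 2 ^ stageBound f p.2, stageBound f p.2 + p.1) :=
    (Primrec.nat_add.to_comp.comp (Primrec.nat_mul.to_comp.comp
      ((computable_stageNum hf).comp Computable.snd)
      (Primrec.nat_pow.to_comp.comp (Computable.const 2) Computable.fst))
      (Primrec.nat_pow.to_comp.comp (Computable.const 2) (hB.comp Computable.snd))).pair
    (Primrec.nat_add.to_comp.comp (hB.comp Computable.snd) Computable.fst)
  exact (computable_decide_lt_natCast_div_two_pow.comp (ha.comp Computable.fst) hx).of_eq
    fun p => by simp only [hiff]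

theorem IsEnum.regainApprox_of_rGood {f r : ℕ → ℕ} {A : Set ℕ} (hfC : Computable f)
    (hf : IsEnum f A) (hrC : Computable r) (hrM : Monotone r) (hrU : ∀ c, ∃ n, c < r n)
    (hG : RGood r f A) : RegainApprox (realOfSet A) := by
  have hcast (n : ℕ) : (stageSum f (r (n + 1)) : ℝ) = realOfSet (EnumBy f (r (n + 1))) :=
    cast_stageSum f _
  refine ⟨fun n => stageSum f (r (n + 1)),
    (computable_stageSum hfC).comp (hrC.comp Computable.succ), fun n m hnm => ?_, ?_, ?_⟩
  · have := realOfSet_mono (enumBy_mono f (hrM (Nat.succ_le_succ hnm)))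
    rwa [← hcast, ← hcast, Rat.cast_le] at this
  · have hr : Tendsto (fun n => r (n + 1)) atTop atTop := tendsto_atTop_atTop.2 fun b =>
      let ⟨n, hn⟩ := hrU b
      ⟨n, fun m hm => hn.le.trans (hrM (by omega))⟩
    exact (hf.tendsto_realOfSet_enumBy.comp hr).congr fun n => (hcast n).symm
  · rw [RGood, ← map_add_atTop_eq_nat 1, frequently_map] at hG
    refine hG.mono fun n hn => ?_
    rw [hcast]
    exact (hf.realOfSet_sub_enumBy_le hn).trans_lt
      (pow_lt_pow_right_of_lt_one₀ (by norm_num) (by norm_num) n.lt_succ_self)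

theorem IsEnum.exists_rGood_of_regainApprox {f : ℕ → ℕ} {A : Set ℕ} (hfC : Computable f)
    (hf : IsEnum f A) (h : RegainApprox (realOfSet A)) :
    ∃ r : ℕ → ℕ, Computable r ∧ Monotone r ∧ (∀ c, ∃ n, c < r n) ∧ RGood r f A := by
  obtain ⟨a, haC, haM, haT, haF⟩ := h
  have haM' : Monotone fun n => (a n : ℝ) := fun _ _ h => Rat.cast_le.2 (haM h)
  have hex (n : ℕ) : ∃ t, (a n : ℝ) - 2⁻¹ ^ n < realOfSet (EnumBy f t) := by
    have : (a n : ℝ) - 2⁻¹ ^ n < realOfSet A := by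
      linarith [haM'.ge_of_tendsto haT n, pow_pos (by norm_num : (0 : ℝ) < 2⁻¹) n]
    exact (hf.tendsto_realOfSet_enumBy.eventually (lt_mem_nhds this)).exists
  let s n := Nat.find (hex n)
  have hsC : Computable s :=
    Computable.nat_find (computable_decide_sub_lt_realOfSet_enumBy haC hfC) hex
  have hsM : Monotone s := fun n m hnm => Nat.find_mono fun t ht => by
    have := pow_le_pow_of_le_one (by norm_num) (by norm_num) hnm (a := (2 : ℝ)⁻¹)
    linarith [haM' hnm]
  refine ⟨fun N => max (s (N + 1)) N, Primrec.nat_max.to_comp.comp (hsC.comp Computable.succ)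
    Computable.id, fun N M h => max_le_max (hsM (Nat.succ_le_succ h)) h,
    fun c => ⟨c + 1, lt_max_of_lt_right c.lt_succ_self⟩, ?_⟩
  rw [← map_add_atTop_eq_nat 1, frequently_map] at haF
  refine haF.mono fun N hN m hm hmA => enumBy_mono f (le_max_left _ _)
    (hf.mem_enumBy_of_realOfSet_sub_lt ?_ m hm hmA)
  have hsN : (a (N + 1) : ℝ) - 2⁻¹ ^ (N + 1) < realOfSet (EnumBy f (s (N + 1))) :=
    Nat.find_spec (hex (N + 1))
  have h2 : (2 : ℝ)⁻¹ ^ N = 2⁻¹ ^ (N + 1) + 2⁻¹ ^ (N + 1) := by ring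
  linarith

/-- For a c.e. set `A`, `2^{-A}` is regainingly approximable iff `A` has a computable
enumeration that is `r`-good for some computable nondecreasing unbounded `r`. -/
theorem stmt_8 (A : Set ℕ) (hA : REPred (· ∈ A)) :
    RegainApprox (realOfSet A) ↔
      ∃ f r : ℕ → ℕ, Computable f ∧ IsEnum f A ∧
        Computable r ∧ Monotone r ∧ (∀ c : ℕ, ∃ n, c < r n) ∧ RGood r f A := by
  constructor
  · intro h
    obtain ⟨f, hfC, hf⟩ := hA.exists_computable_isEnum
    obtain ⟨r, hr⟩ := hf.exists_rGood_of_regainApprox hfC h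
    exact ⟨f, r, hfC, hf, hr⟩
  · rintro ⟨f, r, hfC, hf, hrC, hrM, hrU, hG⟩
    exact hf.regainApprox_of_rGood hfC hrC hrM hrU hG
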